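/- arXiv:2509.01912 — 3 statements merged into one kernel-verified Lean document; each statement's English description precedes it below -/
import Mathlib

section
/- Let α₁, …, α_k be vectors in ℝⁿ each of whose coordinates lies in {0,1}. If the parallelotope P(α₁,…,α_k) = { ∑_{i=1}^k t_i α_i : 0 ≤ t_i ≤ 1 for all i } is contained in the unit hypercube [0,1]ⁿ, then α_i · α_j = 0 (the standard Euclidean inner product vanishes) for all i ≠ j. -/
/-- **Lemma 1 (continuous-parallelotope form).** If `α 1, …, α k` are 0/1 vectors in `ℝⁿ`
and the parallelotope `{ ∑ i, t i • α i : 0 ≤ t i ≤ 1 }` is contained in the unit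
hypercube `[0,1]ⁿ`, then the generators are pairwise orthogonal. -/
theorem parallelotope_in_hypercube_orthogonal
    (n k : ℕ) (α : Fin k → Fin n → ℝ)
    (h01 : ∀ i : Fin k, ∀ x : Fin n, α i x ∈ ({0, 1} : Set ℝ))
    (hsub : ∀ t : Fin k → ℝ, (∀ i, 0 ≤ t i ∧ t i ≤ 1) →
      ∀ x : Fin n, (∑ i, t i * α i x) ∈ Set.Icc (0 : ℝ) 1) :
    ∀ i j : Fin k, i ≠ j → ∑ x, α i x * α j x = 0 := by
  intro i j hij
  apply Finset.sum_eq_zero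
  intro x _
  -- choose t = indicator of {i, j}
  set t : Fin k → ℝ := fun m => (if m = i then 1 else 0) + (if m = j then 1 else 0) with ht
  have htc : ∀ m, 0 ≤ t m ∧ t m ≤ 1 := by
    intro m
    simp only [ht]
    rcases eq_or_ne m i with rfl | hmi
    · simp [hij]
    · rcases eq_or_ne m j with rfl | hmj
      · simp [hmi]
      · simp [hmi, hmj]
  have hsum : (∑ m, t m * α m x) = α i x + α j x := by
    simp only [ht, add_mul, Finset.sum_add_distrib, ite_mul, one_mul, zero_mul]
    rw [Finset.sum_ite_eq' Finset.univ i (fun m => α m x),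
        Finset.sum_ite_eq' Finset.univ j (fun m => α m x)]
    simp
  have := (hsub t htc x).2
  rw [hsum] at this
  rcases h01 i x with hi | hi <;> rcases h01 j x with hj | hj <;>
    simp_all <;> linarith
end

section
/- Let α₁, …, α_k be vectors in ℝⁿ each of whose coordinates lies in {0,1}. If for every subset S ⊆ {1,…,k} the vertex ∑_{i∈S} α_i has all of its coordinates in {0,1}, then α_i · α_j = 0 for all i ≠ j. -/
/-- **Lemma 1 (vertex form).** If `α 1, …, α k` are 0/1 vectors in `ℝⁿ` and every binary
combination `∑ i ∈ S, α i` (a vertex of the generated parallelotope) again has all of its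
coordinates in `{0,1}`, then the generators are pairwise orthogonal. -/
theorem parallelotope_vertices_in_cube_orthogonal
    (n k : ℕ) (α : Fin k → Fin n → ℝ)
    (h01 : ∀ i : Fin k, ∀ x : Fin n, α i x ∈ ({0, 1} : Set ℝ))
    (hvert : ∀ S : Finset (Fin k), ∀ x : Fin n, (∑ i ∈ S, α i x) ∈ ({0, 1} : Set ℝ)) :
    ∀ i j : Fin k, i ≠ j → ∑ x, α i x * α j x = 0 := by
  intro i j hij
  apply Finset.sum_eq_zero
  intro x _
  have hs := hvert {i, j} x
  rw [Finset.sum_pair hij] at hs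
  have hi := h01 i x
  have hj := h01 j x
  simp only [Set.mem_insert_iff, Set.mem_singleton_iff] at hi hj hs
  rcases hi with h | h <;> rcases hj with h' | h' <;> rw [h, h'] <;> norm_num
  rcases hs with h | h <;> linarith
end

section
/- Let f : (Fin n → Bool) → Bool be a Boolean function whose on-set { x : f x = true } equals the vertex set { v_S : S ⊆ {1,…,m} } of the parallelotope generated by nonzero Boolean vectors α₁,…,α_m : Fin n → Bool with pairwise disjoint supports (where v_S i = true iff α_j i = true for some j ∈ S). Then there exists a list of exactly n − m constraints, each constraint being either of the form 'x i = false' for some index i, or of the form 'x i = x i′' for some pair of distinct indices i, i′, such that for every x : Fin n → Bool, f x = true if and only if every constraint in the list is satisfied by x. -/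
/-- A constraint on a Boolean vector `x : Fin n → Bool`: either a zero-constraint
`x i = false`, or an equality-constraint `x i = x i'`. -/
inductive CubeConstraint (n : ℕ) where
  | zero (i : Fin n) : CubeConstraint n
  | eq (i i' : Fin n) : CubeConstraint n

/-- Satisfaction of a constraint by a Boolean vector. -/
def CubeConstraint.sat {n : ℕ} : CubeConstraint n → (Fin n → Bool) → Prop
  | .zero i, x => x i = false
  | .eq i i', x => x i = x i'

/-- Equality-constraints must relate distinct indices. -/
def CubeConstraint.wellFormed {n : ℕ} : CubeConstraint n → Prop
  | .zero _ => True
  | .eq i i' => i ≠ i'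

/-- **Theorem 1 (combinatorial content).** If the on-set of `f` is exactly the vertex set of
the parallelotope generated by nonzero Boolean vectors `α 1, …, α m` with pairwise disjoint
supports, then membership in the on-set is the conjunction of exactly `n - m` constraints,
each either `x i = false` or `x i = x i'` for distinct `i, i'`. -/
theorem onset_parallelotope_constraints
    (n m : ℕ) (α : Fin m → Fin n → Bool)
    (hnz : ∀ j : Fin m, ∃ i : Fin n, α j i = true)
    (hdisj : ∀ j l : Fin m, j ≠ l → ∀ i : Fin n, ¬(α j i = true ∧ α l i = true))
    (f : (Fin n → Bool) → Bool)
    (honset : {x : Fin n → Bool | f x = true} =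
      {v : Fin n → Bool | ∃ S : Finset (Fin m), v = fun i => decide (∃ j ∈ S, α j i = true)}) :
    ∃ L : List (CubeConstraint n),
      L.length = n - m ∧
      (∀ c ∈ L, c.wellFormed) ∧
      (∀ x : Fin n → Bool, f x = true ↔ ∀ c ∈ L, c.sat x) := by
  classical
  choose r hr using hnz
  have huniq : ∀ (i : Fin n) (j l : Fin m), α j i = true → α l i = true → j = l := by
    intro i j l hj hl
    by_contra hne
    exact hdisj j l hne i ⟨hj, hl⟩
  have hinj : Function.Injective r := by
    intro j l h
    exact huniq (r j) j l (hr j) (h ▸ hr l)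
  set T : Finset (Fin n) := Finset.univ \ Finset.image r Finset.univ with hT
  set c : Fin n → CubeConstraint n := fun i =>
    if h : ∃ j, α j i = true then .eq i (r h.choose) else .zero i with hc
  refine ⟨T.toList.map c, ?_, ?_, ?_⟩
  · rw [List.length_map, Finset.length_toList, hT, Finset.card_sdiff_of_subset (Finset.subset_univ _),
      Finset.card_image_of_injective _ hinj, Finset.card_univ, Finset.card_univ,
      Fintype.card_fin, Fintype.card_fin]
  · intro c' hc'
    obtain ⟨i, hi, rfl⟩ := List.mem_map.mp hc'
    rw [Finset.mem_toList, hT, Finset.mem_sdiff] at hi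
    simp only [hc]
    split
    · next h =>
      intro heq
      exact hi.2 (Finset.mem_image.mpr ⟨h.choose, Finset.mem_univ _, (heq ▸ rfl : r h.choose = i)⟩)
    · trivial
  · intro x
    have hx : f x = true ↔ x ∈ {v : Fin n → Bool | ∃ S : Finset (Fin m),
        v = fun i => decide (∃ j ∈ S, α j i = true)} := by
      rw [← honset]; rfl
    rw [hx]
    simp only [Set.mem_setOf_eq]
    constructor
    · rintro ⟨S, rfl⟩ c' hc'
      obtain ⟨i, hi, rfl⟩ := List.mem_map.mp hc'
      rw [Finset.mem_toList, hT, Finset.mem_sdiff] at hi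
      simp only [hc]
      split
      · next h =>
        show decide _ = decide _
        apply decide_eq_decide.mpr
        constructor
        · rintro ⟨j', hj'S, hj'⟩
          have : j' = h.choose := huniq i j' h.choose hj' h.choose_spec
          exact ⟨h.choose, this ▸ hj'S, hr _⟩
        · rintro ⟨j', hj'S, hj'⟩
          have : j' = h.choose := huniq (r h.choose) j' h.choose hj' (hr _)
          exact ⟨h.choose, this ▸ hj'S, h.choose_spec⟩
      · next h =>
        show decide _ = false
        simp only [decide_eq_false_iff_not]
        rintro ⟨j', _, hj'⟩
        exact h ⟨j', hj'⟩
    · intro hsat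
      refine ⟨Finset.univ.filter (fun j => x (r j) = true), ?_⟩
      funext i
      have key : ∀ i ∈ T, (c i).sat x := by
        intro i hi
        exact hsat (c i) (List.mem_map.mpr ⟨i, Finset.mem_toList.mpr hi, rfl⟩)
      by_cases h : ∃ j, α j i = true
      · set j := h.choose with hj
        have hji : α j i = true := h.choose_spec
        have hxi : x i = x (r j) := by
          by_cases hir : i = r j
          · rw [hir]
          · have hiT : i ∈ T := by
              rw [hT, Finset.mem_sdiff]
              refine ⟨Finset.mem_univ _, ?_⟩
              intro hmem
              obtain ⟨l, _, hl⟩ := Finset.mem_image.mp hmem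
              have : j = l := huniq i j l hji (hl ▸ hr l)
              exact hir (this ▸ hl.symm)
            have := key i hiT
            simp only [hc, dif_pos h] at this
            exact this
        rw [hxi]
        have : (∃ j' ∈ Finset.univ.filter (fun j => x (r j) = true), α j' i = true) ↔
            x (r j) = true := by
          constructor
          · rintro ⟨j', hj'S, hj'⟩
            have : j' = j := huniq i j' j hj' hji
            rw [← this]
            exact (Finset.mem_filter.mp hj'S).2
          · intro hx
            exact ⟨j, Finset.mem_filter.mpr ⟨Finset.mem_univ _, hx⟩, hji⟩
        cases hxr : x (r j) with
        | false =>
          symm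
          simp only [decide_eq_false_iff_not]
          rintro ⟨j', hj'S, hj'⟩
          have he : j' = j := huniq i j' j hj' hji
          have h3 := (Finset.mem_filter.mp hj'S).2
          rw [he, hxr] at h3
          exact Bool.noConfusion h3
        | true =>
          symm
          simp only [decide_eq_true_eq]
          exact ⟨j, Finset.mem_filter.mpr ⟨Finset.mem_univ _, hxr⟩, hji⟩
      · have hiT : i ∈ T := by
          rw [hT, Finset.mem_sdiff]
          refine ⟨Finset.mem_univ _, ?_⟩
          intro hmem
          obtain ⟨l, _, hl⟩ := Finset.mem_image.mp hmem
          exact h ⟨l, hl ▸ hr l⟩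
        have := key i hiT
        simp only [hc, dif_neg h] at this
        rw [this]
        symm
        simp only [decide_eq_false_iff_not]
        rintro ⟨j', _, hj'⟩
        exact h ⟨j', hj'⟩
end
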